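/- Let F be a finite field contained as a subring (with the same identity) in a finite commutative ring R of finite length, and let V ⊆ F^n be an F-subspace. Then the R-submodule of R^n generated by V has length λ(R)·dim_F(V). -/

import Mathlib

/-!
An `F`-basis of `V` stays `R`-linearly independent after applying `ι`: over a field the
injective map `F^d → F^n` it defines has a left inverse matrix, and `ι` carries that left
inverse to one over `R`. Hence the span is free of rank `dim_F V`, and length is additive on
finite direct sums.
-/

noncomputable def submodLength {R : Type*} [Ring R] {M : Type*} [AddCommGroup M]
    [Module R M] (N : Submodule R M) : ℕ :=
  ((Order.krullDim (Submodule R ↥N)).unbotD 0).toNat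

noncomputable def ringLength (R : Type*) [CommRing R] : ℕ :=
  ((Order.krullDim (Ideal R)).unbotD 0).toNat

open Set

lemma submodLength_eq_toNat_length {R M : Type*} [Ring R] [AddCommGroup M] [Module R M]
    (N : Submodule R M) : submodLength N = (Module.length R N).toNat := by
  rw [submodLength, ← Module.coe_length, WithBot.unbotD_coe]

lemma ringLength_eq_toNat_length (R : Type*) [CommRing R] :
    ringLength R = (Module.length R R).toNat := by
  rw [ringLength, ← Module.coe_length, WithBot.unbotD_coe]

lemma Matrix.exists_mul_eq_one_of_linearIndependent_col {m n K : Type*} [Fintype m] [Fintype n]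
    [DecidableEq n] [Field K] {A : Matrix m n K} (hA : LinearIndependent K A.col) :
    ∃ C : Matrix n m K, C * A = 1 := by
  classical
  obtain ⟨g, hg⟩ := A.mulVecLin.exists_leftInverse_of_injective
    (LinearMap.ker_eq_bot.mpr (Matrix.mulVec_injective_iff.mpr hA))
  refine ⟨LinearMap.toMatrix' g, Matrix.toLin'.injective ?_⟩
  rw [Matrix.toLin'_mul, Matrix.toLin'_toMatrix', Matrix.toLin'_apply', hg, Matrix.toLin'_one]

lemma LinearIndependent.map_ringHom {ι ι' K S : Type*} [Fintype ι] [Fintype ι'] [Field K]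
    [CommRing S] (f : K →+* S) {v : ι → ι' → K} (hv : LinearIndependent K v) :
    LinearIndependent S (fun i ↦ f ∘ v i) := by
  classical
  obtain ⟨C, hCA⟩ :=
    Matrix.exists_mul_eq_one_of_linearIndependent_col (A := (Matrix.of v).transpose) hv
  have hCA' : C.map f * (Matrix.of v).transpose.map f = 1 := by
    rw [← Matrix.map_mul, hCA, Matrix.map_one _ f.map_zero f.map_one]
  refine (Matrix.mulVec_injective_iff (M := (Matrix.of v).transpose.map f)).mp fun x y hxy ↦ ?_
  simpa only [Matrix.mulVec_mulVec, hCA', Matrix.one_mulVec] using congrArg (C.map f).mulVec hxy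

lemma Submodule.span_image_span_of_tower {K R M N : Type*} [CommSemiring K] [Semiring R]
    [Algebra K R] [AddCommMonoid M] [Module K M] [AddCommMonoid N] [Module K N] [Module R N]
    [IsScalarTower K R N] (φ : M →ₗ[K] N) (s : Set M) :
    span R (φ '' span K s) = span R (φ '' s) := by
  rw [← Submodule.map_coe, Submodule.map_span, Submodule.span_span_of_tower]

lemma Module.length_span_of_linearIndependent {R M ι : Type*} [Ring R] [AddCommGroup M]
    [Module R M] [Fintype ι] {v : ι → M} (hv : LinearIndependent R v) :
    Module.length R (Submodule.span R (range v)) = Fintype.card ι * Module.length R R := by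
  rw [(Module.Basis.span hv).equivFun.length_eq, Module.length_pi, ENat.card_eq_coe_fintype_card]

theorem length_span_of_subspace_general (F : Type*) [Field F]
    (R : Type*) [CommRing R] (ι : F →+* R) (n : ℕ)
    (V : Subspace F (Fin n → F)) :
    submodLength (Submodule.span R ((fun v : Fin n → F => fun i => ι (v i)) '' V)) =
      ringLength R * Module.finrank F ↥V := by
  let _ : Algebra F R := ι.toAlgebra
  let b := Module.finBasis F V
  let v : Fin (Module.finrank F V) → Fin n → F := fun j ↦ b j
  have hV : V = Submodule.span F (range v) := by
    rw [range_comp', ← V.coe_subtype, ← Submodule.map_span, b.span_eq,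
      Submodule.map_subtype_top]
  have hv : LinearIndependent R ((fun v : Fin n → F => fun i => ι (v i)) ∘ v) :=
    (b.linearIndependent.map' V.subtype V.ker_subtype).map_ringHom ι
  have hspan : Submodule.span R ((fun v : Fin n → F => fun i => ι (v i)) '' V) =
      Submodule.span R (range ((fun v : Fin n → F => fun i => ι (v i)) ∘ v)) := by
    have := Submodule.span_image_span_of_tower (R := R)
      ((Algebra.linearMap F R).compLeft (Fin n)) (range v)
    rwa [← hV, ← range_comp] at this
  rw [ringLength_eq_toNat_length, submodLength_eq_toNat_length, hspan,
    Module.length_span_of_linearIndependent hv]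
  simp [mul_comm]

/-- Let `F` be a finite field contained as a subring (same identity,
i.e. via a ring embedding `ι : F →+* R`) of a finite commutative ring `R`, and let
`V ⊆ Fⁿ` be an `F`-subspace. Then the `R`-submodule of `Rⁿ` generated by (the image
of) `V` has length `λ(R) · dim_F V`. -/
theorem length_span_of_subspace (F : Type*) [Field F] [Finite F]
    (R : Type*) [CommRing R] [Finite R] (ι : F →+* R) (n : ℕ)
    (V : Subspace F (Fin n → F)) :
    submodLength (Submodule.span R ((fun v : Fin n → F => fun i => ι (v i)) '' V)) =
      ringLength R * Module.finrank F ↥V :=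
  length_span_of_subspace_general F R ι n V
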